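/- Let z > 0 and q₀, q₊, q₋ ∈ ℝ with q₊ ≠ q₋, and let q̂ : ℝ → ℝ be the piecewise linear kernel q̂(ξ) = q₀ + q₊ξ for ξ ≥ 0 and q̂(ξ) = q₀ + q₋ξ for ξ < 0. If h : [−z, z] → ℝ is continuous and ∫_{−z}^{z} h(s) q̂(ξ − s) ds = 0 for all ξ ∈ (−z, z), then h is identically zero on [−z, z]. In other words, the approximate first-kind integral equation has only the trivial continuous solution. -/

import Mathlib

open Set intervalIntegral

/-!
Writing `q̂(t) = q₀ + q₋ t + (q₊ - q₋) max(t, 0)`, the integral equation says that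
`(q₊ - q₋) Φ(ξ)` plus an affine function of `ξ` vanishes on `(-z, z)`, where
`Φ(ξ) = ∫_{-z}^{ξ} (ξ - s) h(s) ds`. Since `q₊ ≠ q₋`, `Φ` is affine there, so its second
derivative `h` vanishes on `(-z, z)`, and on `[-z, z]` by continuity.
-/

theorem ite_nonneg_add_mul_eq_add_mul_max (q₀ qp qm t : ℝ) :
    (if 0 ≤ t then q₀ + qp * t else q₀ + qm * t) = q₀ + qm * t + (qp - qm) * max t 0 := by
  split_ifs with ht
  · rw [max_eq_left ht]; ring
  · rw [max_eq_right (not_le.mp ht).le]; ring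

theorem HasDerivAt.eq_of_eqOn_affine {g g' : ℝ → ℝ} {U : Set ℝ} {α β x : ℝ} (hU : IsOpen U)
    (hg : ∀ y ∈ U, HasDerivAt g (g' y) y) (haff : ∀ y ∈ U, g y = α + β * y) (hx : x ∈ U) :
    g' x = β := by
  have hlin : HasDerivAt (fun y => α + β * y) β x := by
    simpa using ((hasDerivAt_id x).const_mul β).const_add α
  exact (hg x hx).unique <| hlin.congr_of_eventuallyEq <|
    Filter.eventuallyEq_of_mem (hU.mem_nhds hx) haff

/-- `secondPrimitive f a x = ∫ s in a..x, (x - s) * f s`, the primitive of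
`x ↦ ∫ s in a..x, f s` vanishing at `a`. -/
noncomputable def secondPrimitive (f : ℝ → ℝ) (a x : ℝ) : ℝ :=
  x * (∫ s in a..x, f s) - ∫ s in a..x, s * f s

section

variable {f : ℝ → ℝ} {a b x : ℝ}

theorem hasDerivAt_integral_of_continuousOn_Icc (hf : ContinuousOn f (Icc a b))
    (hx : x ∈ Ioo a b) : HasDerivAt (fun y => ∫ s in a..y, f s) (f x) x := by
  have hIcc : Icc a b ∈ nhds x := Icc_mem_nhds hx.1 hx.2
  have hint : IntervalIntegrable f MeasureTheory.volume a x :=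
    (hf.mono (Icc_subset_Icc_right hx.2.le)).intervalIntegrable_of_Icc hx.1.le
  exact integral_hasDerivAt_right hint
    ⟨Icc a b, hIcc, hf.aestronglyMeasurable measurableSet_Icc⟩ (hf.continuousAt hIcc)

theorem hasDerivAt_secondPrimitive (hf : ContinuousOn f (Icc a b)) (hx : x ∈ Ioo a b) :
    HasDerivAt (secondPrimitive f a) (∫ s in a..x, f s) x := by
  have hsf : ContinuousOn (fun s => s * f s) (Icc a b) := (continuousOn_id' _).mul hf
  exact (((hasDerivAt_id' x).mul (hasDerivAt_integral_of_continuousOn_Icc hf hx)).sub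
    (hasDerivAt_integral_of_continuousOn_Icc hsf hx)).congr_deriv (by ring)

theorem integral_mul_max_sub_eq_secondPrimitive
    (hf : IntervalIntegrable f MeasureTheory.volume a b) (hx : x ∈ Icc a b) :
    ∫ s in a..b, f s * max (x - s) 0 = secondPrimitive f a x := by
  have hx' : x ∈ uIcc a b := mem_uIcc_of_le hx.1 hx.2
  have hfax := hf.mono_set (uIcc_subset_uIcc_left hx')
  have hfxb := hf.mono_set (uIcc_subset_uIcc_right hx')
  have hcont : ContinuousOn (fun s => max (x - s) 0) univ := by fun_prop
  have hleft : ∫ s in a..x, f s * max (x - s) 0 = ∫ s in a..x, (x * f s - s * f s) := by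
    refine integral_congr fun s hs => ?_
    rw [uIcc_of_le hx.1] at hs
    rw [max_eq_left (sub_nonneg.2 hs.2)]
    ring
  have hright : ∫ s in x..b, f s * max (x - s) 0 = 0 := by
    refine (integral_congr fun s hs => ?_).trans integral_zero
    rw [uIcc_of_le hx.2] at hs
    simp [max_eq_right (sub_nonpos.2 hs.1)]
  rw [← integral_add_adjacent_intervals (hfax.mul_continuousOn (hcont.mono (subset_univ _)))
      (hfxb.mul_continuousOn (hcont.mono (subset_univ _))), hleft, hright, add_zero,
    integral_sub (hfax.const_mul x) (hfax.continuousOn_mul (continuousOn_id' _)),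
    integral_const_mul, secondPrimitive]

theorem integral_mul_add_mul_max_sub (hf : IntervalIntegrable f MeasureTheory.volume a b)
    (hx : x ∈ Icc a b) (c₀ c₁ c₂ : ℝ) :
    ∫ s in a..b, f s * (c₀ + c₁ * (x - s) + c₂ * max (x - s) 0) =
      (c₀ + c₁ * x) * (∫ s in a..b, f s) - c₁ * (∫ s in a..b, s * f s) +
        c₂ * secondPrimitive f a x := by
  have hsf := hf.continuousOn_mul (continuousOn_id' _)
  have hsplit : ∀ s, f s * (c₀ + c₁ * (x - s) + c₂ * max (x - s) 0) =
      (c₀ + c₁ * x) * f s - c₁ * (s * f s) + c₂ * (f s * max (x - s) 0) := fun s => by ring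
  simp_rw [hsplit]
  rw [integral_add ((hf.const_mul _).sub (hsf.const_mul _))
      ((hf.mul_continuousOn (by fun_prop)).const_mul _),
    integral_sub (hf.const_mul _) (hsf.const_mul _),
    integral_const_mul, integral_const_mul, integral_const_mul,
    integral_mul_max_sub_eq_secondPrimitive hf hx]

theorem eqOn_zero_of_secondPrimitive_eq_affine (hab : a < b) (hf : ContinuousOn f (Icc a b))
    {α β : ℝ} (haff : ∀ x ∈ Ioo a b, secondPrimitive f a x = α + β * x) :
    EqOn f 0 (Icc a b) := by
  have hprim : ∀ x ∈ Ioo a b, ∫ s in a..x, f s = β + 0 * x := fun x hx => by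
    rw [HasDerivAt.eq_of_eqOn_affine isOpen_Ioo
      (fun y hy => hasDerivAt_secondPrimitive hf hy) haff hx, zero_mul, add_zero]
  have hIoo : EqOn f 0 (Ioo a b) := fun x hx =>
    HasDerivAt.eq_of_eqOn_affine isOpen_Ioo
      (fun y hy => hasDerivAt_integral_of_continuousOn_Icc hf hy) hprim hx
  exact hIoo.of_subset_closure hf continuousOn_const Ioo_subset_Icc_self
    (closure_Ioo hab.ne).superset

end

/-- With the piecewise linear kernel `q̂` and `q₊ ≠ q₋`, the first-kind integral
equation `∫_{−z}^{z} h(s) q̂(ξ−s) ds = 0` for all `ξ ∈ (−z,z)` has only the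
trivial continuous solution `h ≡ 0` on `[−z,z]`. -/
theorem pwlinear_first_kind_only_trivial_solution
    (z q₀ qp qm : ℝ) (hz : 0 < z) (hq : qp ≠ qm)
    (qhat : ℝ → ℝ)
    (hqhat : ∀ ξ : ℝ, qhat ξ = if 0 ≤ ξ then q₀ + qp * ξ else q₀ + qm * ξ)
    (h : ℝ → ℝ) (hcont : ContinuousOn h (Icc (-z) z))
    (heq : ∀ ξ ∈ Ioo (-z) z, (∫ s in (-z)..z, h s * qhat (ξ - s)) = 0) :
    ∀ ξ ∈ Icc (-z) z, h ξ = 0 := by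
  have hint : IntervalIntegrable h MeasureTheory.volume (-z) z :=
    hcont.intervalIntegrable_of_Icc (neg_le_self hz.le)
  set M₀ := ∫ s in (-z)..z, h s
  set M₁ := ∫ s in (-z)..z, s * h s
  have hqp : qp - qm ≠ 0 := sub_ne_zero.2 hq
  refine eqOn_zero_of_secondPrimitive_eq_affine (neg_lt_self hz) hcont
    (α := (qm * M₁ - q₀ * M₀) / (qp - qm)) (β := -(qm * M₀) / (qp - qm)) fun ξ hξ => ?_
  have hsol := heq ξ hξ
  simp_rw [hqhat, ite_nonneg_add_mul_eq_add_mul_max] at hsol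
  rw [integral_mul_add_mul_max_sub hint (Ioo_subset_Icc_self hξ)] at hsol
  field_simp
  linear_combination hsol
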